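/- arXiv:1205.3277 — 2 statements merged into one kernel-verified Lean document; each statement's English description precedes it below -/
import Mathlib

section
/- As θ → ∞, the effective capacity C_e(θ) = -(1/θ)·ln(E[e^{-θR}]) converges to the essential infimum of R. -/
/-!
Write `m = essInf R` and `I(θ) = E[e^{-θR}]`. Since `R ≥ m` almost surely, `I(θ) ≤ e^{-θm}`, so
`C_e(θ) ≥ m`. Conversely, for every `c > m` the event `{R ≤ c}` has positive probability `p`, and
`I(θ) ≥ p e^{-θc}` gives `C_e(θ) ≤ c - (log p)/θ`, which tends to `c`.
-/

open MeasureTheory Real Filter Topology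

noncomputable def effectiveCapacity {Ω : Type*} [MeasurableSpace Ω] (μ : Measure Ω)
    (R : Ω → ℝ) (θ : ℝ) : ℝ :=
  -(1 / θ) * log (∫ ω, exp (-θ * R ω) ∂μ)

section EffectiveCapacity

variable {Ω : Type*} [MeasurableSpace Ω] {μ : Measure Ω} {R : Ω → ℝ} {θ m c : ℝ}

lemma measure_le_pos_of_essInf_lt (hcobdd : IsCoboundedUnder (· ≥ ·) (ae μ) R)
    (hc : essInf R μ < c) : 0 < μ {ω | R ω ≤ c} := by
  by_contra! h
  have hgt : ∀ᵐ ω ∂μ, c < R ω := by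
    rw [ae_iff]
    simpa only [not_lt] using nonpos_iff_eq_zero.1 h
  exact (le_essInf_of_ae_le c (hgt.mono fun _ ↦ le_of_lt) hcobdd).not_gt hc

lemma integrable_exp_neg_mul [IsFiniteMeasure μ] (hR : AEMeasurable R μ)
    (hm : ∀ᵐ ω ∂μ, m ≤ R ω) (hθ : 0 ≤ θ) : Integrable (fun ω ↦ exp (-θ * R ω)) μ := by
  refine Integrable.mono' (integrable_const (exp (-θ * m)))
    (hR.const_mul (-θ)).exp.aestronglyMeasurable ?_
  filter_upwards [hm] with ω hω
  rw [norm_of_nonneg (exp_pos _).le, exp_le_exp]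
  nlinarith

lemma integral_exp_neg_mul_le [IsProbabilityMeasure μ] (hm : ∀ᵐ ω ∂μ, m ≤ R ω) (hθ : 0 ≤ θ) :
    ∫ ω, exp (-θ * R ω) ∂μ ≤ exp (-θ * m) := by
  calc ∫ ω, exp (-θ * R ω) ∂μ ≤ ∫ _, exp (-θ * m) ∂μ := by
        refine integral_mono_of_nonneg (ae_of_all _ fun ω ↦ (exp_pos _).le)
          (integrable_const _) ?_
        filter_upwards [hm] with ω hω
        rw [exp_le_exp]
        nlinarith
    _ = exp (-θ * m) := by simp

lemma measureReal_mul_exp_le_integral_exp_neg_mul [IsFiniteMeasure μ]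
    (hint : Integrable (fun ω ↦ exp (-θ * R ω)) μ) (hθ : 0 ≤ θ) (c : ℝ) :
    μ.real {ω | R ω ≤ c} * exp (-θ * c) ≤ ∫ ω, exp (-θ * R ω) ∂μ := by
  have hsub : {ω | R ω ≤ c} ⊆ {ω | exp (-θ * c) ≤ exp (-θ * R ω)} :=
    fun ω (hω : R ω ≤ c) ↦ exp_le_exp.2 (by nlinarith)
  calc μ.real {ω | R ω ≤ c} * exp (-θ * c)
      ≤ exp (-θ * c) * μ.real {ω | exp (-θ * c) ≤ exp (-θ * R ω)} := by
        rw [mul_comm]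
        exact mul_le_mul_of_nonneg_left (measureReal_mono hsub) (exp_pos _).le
    _ ≤ ∫ ω, exp (-θ * R ω) ∂μ :=
        mul_meas_ge_le_integral_of_nonneg (ae_of_all _ fun ω ↦ (exp_pos _).le) hint _

lemma le_effectiveCapacity [IsProbabilityMeasure μ]
    (hint : Integrable (fun ω ↦ exp (-θ * R ω)) μ) (hm : ∀ᵐ ω ∂μ, m ≤ R ω) (hθ : 0 < θ) :
    m ≤ effectiveCapacity μ R θ := by
  have hlog : log (∫ ω, exp (-θ * R ω) ∂μ) ≤ -θ * m := by
    rw [← log_exp (-θ * m)]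
    exact log_le_log (integral_exp_pos hint) (integral_exp_neg_mul_le hm hθ.le)
  rw [effectiveCapacity, neg_mul, one_div_mul_eq_div, le_neg, div_le_iff₀ hθ]
  linarith

lemma effectiveCapacity_le [IsFiniteMeasure μ]
    (hint : Integrable (fun ω ↦ exp (-θ * R ω)) μ) (hθ : 0 < θ)
    (hp : 0 < μ.real {ω | R ω ≤ c}) :
    effectiveCapacity μ R θ ≤ c - log (μ.real {ω | R ω ≤ c}) / θ := by
  have hlog : log (μ.real {ω | R ω ≤ c}) - θ * c ≤ log (∫ ω, exp (-θ * R ω) ∂μ) := by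
    calc log (μ.real {ω | R ω ≤ c}) - θ * c
        = log (μ.real {ω | R ω ≤ c} * exp (-θ * c)) := by
          rw [log_mul hp.ne' (exp_pos _).ne', log_exp]
          ring
      _ ≤ log (∫ ω, exp (-θ * R ω) ∂μ) :=
          log_le_log (by positivity) (measureReal_mul_exp_le_integral_exp_neg_mul hint hθ.le c)
  rw [effectiveCapacity, neg_mul, one_div_mul_eq_div, neg_le, neg_sub, sub_le_iff_le_add,
    div_add' _ _ _ hθ.ne', div_le_div_iff_of_pos_right hθ]
  linarith

theorem tendsto_effectiveCapacity_essInf [IsProbabilityMeasure μ] (hR : AEMeasurable R μ)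
    (hbdd : IsBoundedUnder (· ≥ ·) (ae μ) R) (hcobdd : IsCoboundedUnder (· ≥ ·) (ae μ) R) :
    Tendsto (effectiveCapacity μ R) atTop (𝓝 (essInf R μ)) := by
  have hm : ∀ᵐ ω ∂μ, essInf R μ ≤ R ω := ae_essInf_le hbdd
  have hint : ∀ θ, 0 ≤ θ → Integrable (fun ω ↦ exp (-θ * R ω)) μ := fun θ ↦
    integrable_exp_neg_mul hR hm
  refine tendsto_order.2 ⟨fun a ha ↦ ?_, fun b hb ↦ ?_⟩
  · filter_upwards [eventually_gt_atTop 0] with θ hθ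
    exact ha.trans_le (le_effectiveCapacity (hint θ hθ.le) hm hθ)
  · obtain ⟨c, hmc, hcb⟩ := exists_between hb
    have hp : 0 < μ.real {ω | R ω ≤ c} :=
      ENNReal.toReal_pos (measure_le_pos_of_essInf_lt hcobdd hmc).ne' (by finiteness)
    have hbound : Tendsto (fun θ ↦ c - log (μ.real {ω | R ω ≤ c}) / θ) atTop (𝓝 c) := by
      simpa using (tendsto_const_nhds (x := c)).sub
        ((tendsto_const_nhds (x := log (μ.real {ω | R ω ≤ c}))).div_atTop tendsto_id)
    filter_upwards [eventually_gt_atTop 0, hbound.eventually (gt_mem_nhds hcb)] with θ hθ hlt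
    exact (effectiveCapacity_le (hint θ hθ.le) hθ hp).trans_lt hlt

end EffectiveCapacity

/-- As θ → ∞ the effective capacity converges to the essential infimum of R. -/
theorem effective_capacity_tendsto_essInf
    {Ω : Type*} [MeasureSpace Ω] [IsProbabilityMeasure (volume : Measure Ω)]
    (R : Ω → ℝ) (hmeas : Measurable R)
    (hnn : ∀ ω, 0 ≤ R ω) (M : ℝ) (hbd : ∀ ω, R ω ≤ M) :
    Tendsto (fun θ : ℝ => -(1 / θ) * Real.log (∫ ω, Real.exp (-θ * R ω)))
      atTop (nhds (essInf R (volume : Measure Ω))) :=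
  tendsto_effectiveCapacity_essInf hmeas.aemeasurable
    (isBoundedUnder_of_eventually_ge (ae_of_all _ hnn)) (isCoboundedUnder_ge_of_le _ hbd)
end

section
/- Let γ₃ < γ₁ ≤ γ₂ (all positive) and define τ = γ₁(γ₁-γ₃)/(γ₂(γ₂-γ₃)), so 0 < τ ≤ 1. If P_A ≥ 0 and P_B = τ·P_A / (1 + (1-τ)·γ₃·P_A), then (γ₁-γ₃)·P_A/(γ₂·(1+γ₃P_A)) = (γ₂-γ₃)·P_B/(γ₁·(1+γ₃P_B)). -/
/-!
Write `h(P) = P / (1 + γ₃ P)`, so the two relay-power expressions are `(γ₁ - γ₃)/γ₂ · h(P_A)` and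
`(γ₂ - γ₃)/γ₁ · h(P_B)`. The coupling `P_B = τ P_A / (1 + (1 - τ) γ₃ P_A)` is exactly the Möbius map
that `h` conjugates to multiplication by `τ`, i.e. `h(P_B) = τ h(P_A)`, and `τ` was chosen so that
`(γ₂ - γ₃)/γ₁ · τ = (γ₁ - γ₃)/γ₂`.
-/

section Field

variable {K : Type*} [Field K]

theorem one_add_mul_coupled {γ τ P : K} (hD : 1 + (1 - τ) * γ * P ≠ 0) :
    1 + γ * (τ * P / (1 + (1 - τ) * γ * P)) = (1 + γ * P) / (1 + (1 - τ) * γ * P) := by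
  rw [eq_div_iff hD, add_mul, mul_assoc γ, div_mul_cancel₀ _ hD]
  ring

theorem coupled_div_one_add_mul {γ τ P : K} (hD : 1 + (1 - τ) * γ * P ≠ 0) :
    τ * P / (1 + (1 - τ) * γ * P) / (1 + γ * (τ * P / (1 + (1 - τ) * γ * P))) =
      τ * (P / (1 + γ * P)) := by
  rw [one_add_mul_coupled hD, div_div_div_cancel_right₀ hD, mul_div_assoc]

theorem div_mul_coupling_ratio {γ₁ γ₂ γ₃ : K} (hγ₁ : γ₁ ≠ 0) (hγ₂₃ : γ₂ - γ₃ ≠ 0) :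
    (γ₂ - γ₃) / γ₁ * (γ₁ * (γ₁ - γ₃) / (γ₂ * (γ₂ - γ₃))) = (γ₁ - γ₃) / γ₂ := by
  field_simp

end Field

theorem coupling_ratio_le_one {γ₁ γ₂ γ₃ : ℝ} (h3 : 0 < γ₃) (h31 : γ₃ < γ₁) (h12 : γ₁ ≤ γ₂) :
    γ₁ * (γ₁ - γ₃) / (γ₂ * (γ₂ - γ₃)) ≤ 1 := by
  have h32 : 0 < γ₂ - γ₃ := by linarith
  rw [div_le_one (by nlinarith)]
  nlinarith

/-- Coupling of the source powers in region R₄ of the three-phase protocol: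
the two expressions for the relay power coincide. -/
theorem region_four_power_coupling
    (γ₁ γ₂ γ₃ τ PA PB : ℝ)
    (h3 : 0 < γ₃) (h31 : γ₃ < γ₁) (h12 : γ₁ ≤ γ₂)
    (hτ : τ = γ₁ * (γ₁ - γ₃) / (γ₂ * (γ₂ - γ₃)))
    (hPA : 0 ≤ PA)
    (hPB : PB = τ * PA / (1 + (1 - τ) * γ₃ * PA)) :
    (γ₁ - γ₃) * PA / (γ₂ * (1 + γ₃ * PA)) =
      (γ₂ - γ₃) * PB / (γ₁ * (1 + γ₃ * PB)) := by
  have hτ_le : τ ≤ 1 := hτ ▸ coupling_ratio_le_one h3 h31 h12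
  have hD : 1 + (1 - τ) * γ₃ * PA ≠ 0 := by
    have : 0 ≤ (1 - τ) * γ₃ * PA := by
      have := sub_nonneg.mpr hτ_le
      positivity
    linarith
  have hPB_div : PB / (1 + γ₃ * PB) = τ * (PA / (1 + γ₃ * PA)) :=
    hPB ▸ coupled_div_one_add_mul hD
  rw [mul_div_mul_comm, mul_div_mul_comm, hPB_div, ← mul_assoc, hτ,
    div_mul_coupling_ratio (by linarith) (by linarith)]
end
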